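/- arXiv:math/0411610 — 4 statements merged into one kernel-verified Lean document; each statement's English description precedes it below -/
import Mathlib

section
/- Let d ≥ 3 and let h_0,...,h_d be nonnegative integers with h_0 = 1. Define f_{k} = Σ_{i=0}^{d} h_i * C(d-i, d-1-k) for k = 0,...,d-1. Then for all i < j with i + j ≤ d - 2, we have f_i < f_j. -/
/-!
Compare `f i` and `f j` summand by summand. A binomial coefficient `C(n, m)` only grows as `m`
moves towards `n / 2` (unimodality and symmetry), and for `i < j`, `i + j ≤ d - 2`, in the summand
of index `t` the lower index `d - 1 - j` is at least as close to the middle of `d - t` as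
`d - 1 - i` is. For `t = 1` it is
strictly closer, and `h 1 ≥ 1` makes that summand strictly larger.
-/

namespace Nat

variable {n a b : ℕ}

lemma choose_lt_choose_succ_right {k : ℕ} (hk : 2 * k + 2 ≤ n) : n.choose k < n.choose (k + 1) :=
  Nat.lt_of_mul_lt_mul_right (a := k + 1) <| by
    rw [choose_succ_right_eq]
    exact Nat.mul_lt_mul_of_pos_left (by omega) (choose_pos (by omega))

lemma choose_strictMonoOn_Iic_half (n : ℕ) : StrictMonoOn n.choose (Set.Iic (n / 2)) :=
  strictMonoOn_of_lt_add_one Set.ordConnected_Iic fun _ _ _ hk =>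
    choose_lt_choose_succ_right (by rw [Set.mem_Iic] at hk; omega)

lemma choose_le_choose_of_le_of_add_le (hab : a ≤ b) (h : a + b ≤ n) :
    n.choose a ≤ n.choose b := by
  have ha : a ∈ Set.Iic (n / 2) := by rw [Set.mem_Iic]; omega
  by_cases hb : b ≤ n / 2
  · exact (choose_strictMonoOn_Iic_half n).monotoneOn ha hb hab
  · rw [← choose_symm (by omega : b ≤ n)]
    exact (choose_strictMonoOn_Iic_half n).monotoneOn ha (by rw [Set.mem_Iic]; omega) (by omega)

lemma choose_lt_choose_of_lt_of_add_lt (hab : a < b) (h : a + b < n) :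
    n.choose a < n.choose b := by
  have ha : a ∈ Set.Iic (n / 2) := by rw [Set.mem_Iic]; omega
  by_cases hb : b ≤ n / 2
  · exact choose_strictMonoOn_Iic_half n ha hb hab
  · rw [← choose_symm (by omega : b ≤ n)]
    exact choose_strictMonoOn_Iic_half n ha (by rw [Set.mem_Iic]; omega) (by omega)

lemma choose_le_choose_of_le_of_le_add (hab : a ≤ b) (h : n ≤ a + b) :
    n.choose b ≤ n.choose a := by
  rcases le_or_gt b n with hb | hb
  · rw [← choose_symm hb]
    exact choose_le_choose_of_le_of_add_le (by omega) (by omega)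
  · rw [choose_eq_zero_of_lt hb]
    exact Nat.zero_le _

lemma choose_lt_choose_of_lt_of_lt_add (hab : a < b) (hb : b ≤ n) (h : n < a + b) :
    n.choose b < n.choose a := by
  rw [← choose_symm hb]
  exact choose_lt_choose_of_lt_of_add_lt (by omega) (by omega)

end Nat

theorem stmt0_general (d : ℕ) (h : ℕ → ℕ) (h1 : 1 ≤ h 1)
    (f : ℕ → ℕ)
    (hf : ∀ k, f k = ∑ i ∈ Finset.range (d + 1), h i * Nat.choose (d - i) (d - 1 - k)) :
    ∀ i j, i < j → i + j ≤ d - 2 → f i < f j := by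
  intro i j hij hsum
  rw [hf i, hf j]
  apply Finset.sum_lt_sum
  · intro t _
    exact Nat.mul_le_mul_left _ (Nat.choose_le_choose_of_le_of_le_add (by omega) (by omega))
  · refine ⟨1, Finset.mem_range.mpr (by omega), Nat.mul_lt_mul_of_pos_left ?_ h1⟩
    exact Nat.choose_lt_choose_of_lt_of_lt_add (by omega) (by omega) (by omega)

theorem stmt0 (d : ℕ) (hd : 3 ≤ d) (h : ℕ → ℕ) (h0 : h 0 = 1) (h1 : 1 ≤ h 1)
    (f : ℕ → ℕ)
    (hf : ∀ k, f k = ∑ i ∈ Finset.range (d + 1), h i * Nat.choose (d - i) (d - 1 - k)) :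
    ∀ i j, i < j → i + j ≤ d - 2 → f i < f j :=
  stmt0_general d h h1 f hf
end

section
/- For d ≥ 3 and 0 ≤ i ≤ ⌊d/2⌋ with 2i ≠ d, the sequence b̃^i = (b̃_0,...,b̃_{d-1}) with b̃_k = C(i, d-1-k) + C(d-i, d-1-k) is unimodal with a peak at index d - 1 - ⌊(d-i)/2⌋. -/
/-!
Write `j = d - 1 - k`, so that the sequence is `C(i, j) + C(d - i, j)` read backwards. Past the
middle of row `d - i`, both binomials decrease in `j`. Before it, the row `n = d - i` gains
`Δ_n(j) = C(n, j + 1) - C(n, j) ≥ 0` while the row `i` may lose `-Δ_i(j)`. By Pascal's rule `Δ_n(j)` is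
decreasing in `n` up to `n = 2j` and increasing from there on, so the loss is at most
`-Δ_{2j}(j) = Cat j` and the gain at least `Δ_{2j+2}(j) = Cat (j + 1)`, and Catalan numbers grow.
-/

namespace Nat

theorem choose_le_choose_succ_of_two_mul_lt {n j : ℕ} (h : 2 * j < n) :
    n.choose j ≤ n.choose (j + 1) := by
  refine Nat.le_of_mul_le_mul_right ?_ (succ_pos j)
  rw [choose_succ_right_eq]
  exact Nat.mul_le_mul_left _ (by omega)

theorem choose_succ_le_choose_of_le_two_mul_succ {n j : ℕ} (h : n ≤ 2 * j + 1) :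
    n.choose (j + 1) ≤ n.choose j := by
  refine Nat.le_of_mul_le_mul_right ?_ (succ_pos j)
  rw [choose_succ_right_eq]
  exact Nat.mul_le_mul_left _ (by omega)

end Nat

def chooseDiff (n j : ℕ) : ℤ := n.choose (j + 1) - n.choose j

theorem chooseDiff_succ_succ (n j : ℕ) :
    chooseDiff (n + 1) (j + 1) = chooseDiff n (j + 1) + chooseDiff n j := by
  simp only [chooseDiff, Nat.choose_succ_succ]
  push_cast
  ring

theorem chooseDiff_nonneg {n j : ℕ} (h : 2 * j < n) : 0 ≤ chooseDiff n j :=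
  sub_nonneg.2 (by exact_mod_cast Nat.choose_le_choose_succ_of_two_mul_lt h)

theorem chooseDiff_nonpos {n j : ℕ} (h : n ≤ 2 * j + 1) : chooseDiff n j ≤ 0 :=
  sub_nonpos.2 (by exact_mod_cast Nat.choose_succ_le_choose_of_le_two_mul_succ h)

theorem chooseDiff_two_mul_succ (j : ℕ) : chooseDiff (2 * j + 1) j = 0 := by
  simp [chooseDiff, Nat.choose_symm_half]

theorem chooseDiff_le_chooseDiff_succ_left {n j : ℕ} (h : 2 * j ≤ n + 1) :
    chooseDiff n j ≤ chooseDiff (n + 1) j := by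
  cases j with
  | zero => simp [chooseDiff]
  | succ j =>
    rw [chooseDiff_succ_succ]
    linarith [chooseDiff_nonneg (n := n) (j := j) (by omega)]

theorem chooseDiff_succ_left_le_chooseDiff {n j : ℕ} (h : n + 1 ≤ 2 * j) :
    chooseDiff (n + 1) j ≤ chooseDiff n j := by
  cases j with
  | zero => omega
  | succ j =>
    rw [chooseDiff_succ_succ]
    linarith [chooseDiff_nonpos (n := n) (j := j) (by omega)]

theorem chooseDiff_mono_left {n n' j : ℕ} (hn : 2 * j ≤ n + 1) (h : n ≤ n') :
    chooseDiff n j ≤ chooseDiff n' j := by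
  induction n', h using Nat.le_induction with
  | base => rfl
  | succ m hm ih => exact ih.trans (chooseDiff_le_chooseDiff_succ_left (by omega))

theorem chooseDiff_two_mul_le (m j : ℕ) : chooseDiff (2 * j) j ≤ chooseDiff m j := by
  rcases le_total (2 * j) m with h | h
  · exact chooseDiff_mono_left (by omega) h
  · induction h using Nat.decreasingInduction with
    | self => rfl
    | of_succ m hm ih => exact ih.trans (chooseDiff_succ_left_le_chooseDiff hm)

theorem chooseDiff_two_mul_add_nonneg (j : ℕ) :
    0 ≤ chooseDiff (2 * j) j + chooseDiff (2 * j + 2) j := by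
  cases j with
  | zero => simp [chooseDiff]
  | succ j =>
    have hodd := chooseDiff_succ_succ (2 * j + 2) j
    have heven := chooseDiff_succ_succ (2 * j + 3) j
    have hmono := chooseDiff_le_chooseDiff_succ_left (n := 2 * j + 2) (j := j) (by omega)
    have hzero := chooseDiff_two_mul_succ (j + 1)
    rw [show 2 * (j + 1) + 1 = 2 * j + 2 + 1 by ring] at hzero
    rw [show 2 * (j + 1) = 2 * j + 2 by ring, show 2 * j + 2 + 2 = 2 * j + 3 + 1 by ring]
    linarith

theorem choose_add_choose_le_choose_succ_add_choose_succ (m : ℕ) {n j : ℕ}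
    (h : 2 * (j + 1) ≤ n) :
    m.choose j + n.choose j ≤ m.choose (j + 1) + n.choose (j + 1) := by
  have hm := chooseDiff_two_mul_le m j
  have hn := chooseDiff_mono_left (n := 2 * j + 2) (j := j) (by omega) h
  have hcat := chooseDiff_two_mul_add_nonneg j
  simp only [chooseDiff] at hm hn hcat
  omega

theorem choose_succ_add_choose_succ_le_choose_add_choose {m n j : ℕ}
    (hm : m ≤ 2 * j + 1) (hn : n ≤ 2 * j + 1) :
    m.choose (j + 1) + n.choose (j + 1) ≤ m.choose j + n.choose j :=
  add_le_add (Nat.choose_succ_le_choose_of_le_two_mul_succ hm)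
    (Nat.choose_succ_le_choose_of_le_two_mul_succ hn)

theorem stmt2_general (d : ℕ) (i : ℕ) (hi : i ≤ d / 2)
    (b : ℕ → ℕ)
    (hb : ∀ k, b k = Nat.choose i (d - 1 - k) + Nat.choose (d - i) (d - 1 - k)) :
    (∀ k, k + 1 ≤ d - 1 - (d - i) / 2 → b k ≤ b (k + 1)) ∧
    (∀ k, d - 1 - (d - i) / 2 ≤ k → k + 1 ≤ d - 1 → b (k + 1) ≤ b k) := by
  constructor
  · intro k hk
    rw [hb, hb, show d - 1 - k = d - 2 - k + 1 by omega, show d - 1 - (k + 1) = d - 2 - k by omega]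
    exact choose_succ_add_choose_succ_le_choose_add_choose (by omega) (by omega)
  · intro k hk hkd
    rw [hb, hb, show d - 1 - k = d - 2 - k + 1 by omega, show d - 1 - (k + 1) = d - 2 - k by omega]
    exact choose_add_choose_le_choose_succ_add_choose_succ i (by omega)

theorem stmt2 (d : ℕ) (hd : 3 ≤ d) (i : ℕ) (hi : i ≤ d / 2) (hne : 2 * i ≠ d)
    (b : ℕ → ℕ)
    (hb : ∀ k, b k = Nat.choose i (d - 1 - k) + Nat.choose (d - i) (d - 1 - k)) :
    (∀ k, k + 1 ≤ d - 1 - (d - i) / 2 → b k ≤ b (k + 1)) ∧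
    (∀ k, d - 1 - (d - i) / 2 ≤ k → k + 1 ≤ d - 1 → b (k + 1) ≤ b k) :=
  stmt2_general d i hi b hb
end

section
/- Let d ≥ 3 and let h_0,...,h_d be nonnegative integers with h_0 = h_d = 1 and h_i = h_{d-i} for all i (Dehn–Sommerville symmetry). Define f_k = Σ_{i=0}^d h_i * C(d-i, d-1-k). Then f_{⌊3(d-1)/4⌋} > f_{⌊3(d-1)/4⌋+1} > ... > f_{d-1}. -/
/-!
Reading the index backwards, `f (d - 1 - n) = S n := ∑ᵢ hᵢ C(d - i, n)`, and by the symmetry of `h`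
also `2 S n = ∑ᵢ hᵢ (C(d - i, n) + C(i, n))`. Each of the vectors `n ↦ C(d - i, n) + C(i, n)` is
weakly increasing as long as `4 n + 2 ≤ d`, since the increase of the larger binomial coefficient
outweighs the decrease of the smaller one; the vector with `i = 0` is even strictly increasing
there, and `h₀ = 1` makes it count.
-/

open Finset

namespace Nat

theorem cast_choose_succ_right_eq (n k : ℕ) :
    ((n.choose (k + 1) * (k + 1) : ℕ) : ℤ) = n.choose k * ((n : ℤ) - k) := by
  rcases le_or_gt k n with hk | hk
  · rw [choose_succ_right_eq, Nat.cast_mul, Nat.cast_sub hk]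
  · simp [choose_eq_zero_of_lt hk, choose_eq_zero_of_lt (Nat.lt_succ_of_lt hk)]

theorem choose_add_choose_le_succ {a b j : ℕ} (hab : 4 * j + 2 ≤ a + b) :
    a.choose j + b.choose j ≤ a.choose (j + 1) + b.choose (j + 1) := by
  wlog hle : a ≤ b generalizing a b
  · rw [add_comm (a.choose j), add_comm (a.choose (j + 1))]
    exact this (by omega) (by omega)
  have hA := cast_choose_succ_right_eq a j
  have hB := cast_choose_succ_right_eq b j
  have hAB : (a.choose j : ℤ) ≤ b.choose j := by exact_mod_cast choose_le_choose j hle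
  have hb : (2 * j + 1 : ℤ) ≤ b := by omega
  push_cast at hA hB
  -- `(j + 1) * (RHS - LHS) = (a - 2j - 1) C(a, j) + (b - 2j - 1) C(b, j)`, and `C(a, j) ≤ C(b, j)`
  -- lets the second term absorb the first.
  suffices hle' : ((j + 1) * (a.choose j + b.choose j) : ℤ) ≤
      (j + 1) * (a.choose (j + 1) + b.choose (j + 1)) by
    exact_mod_cast le_of_mul_le_mul_left hle' (by positivity)
  nlinarith [mul_le_mul_of_nonneg_left hAB (by omega : (0 : ℤ) ≤ b - 2 * j - 1),
    mul_nonneg (Int.natCast_nonneg (a.choose j)) (by omega : (0 : ℤ) ≤ a + b - 4 * j - 2)]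

theorem choose_add_choose_zero_lt_succ {d j : ℕ} (hd : 3 ≤ d) (hj : 4 * j + 2 ≤ d) :
    d.choose j + choose 0 j < d.choose (j + 1) + choose 0 (j + 1) := by
  rcases j with _ | j
  · simp only [choose_zero_right, zero_add, choose_one_right]
    omega
  · simp only [choose_zero_succ, add_zero]
    have hpos : 0 < d.choose (j + 1) := choose_pos (by omega)
    have key := choose_succ_right_eq d (j + 1)
    refine Nat.lt_of_mul_lt_mul_right (a := j + 2) ?_
    rw [key]
    exact Nat.mul_lt_mul_of_pos_left (by omega) hpos

end Nat

theorem sum_mul_choose_sub_reflect {d n : ℕ} {h : ℕ → ℕ} (hsym : ∀ i ≤ d, h i = h (d - i)) :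
    ∑ i ∈ range (d + 1), h i * (d - i).choose n = ∑ i ∈ range (d + 1), h i * i.choose n := by
  rw [← sum_range_reflect]
  refine sum_congr rfl fun i hi => ?_
  have hi : i ≤ d := Nat.lt_succ_iff.mp (mem_range.mp hi)
  rw [show d + 1 - 1 - i = d - i by omega, Nat.sub_sub_self hi, ← hsym i hi]

theorem sum_mul_choose_sub_lt_succ {d m : ℕ} {h : ℕ → ℕ} (hd : 3 ≤ d) (h0 : 0 < h 0)
    (hsym : ∀ i ≤ d, h i = h (d - i)) (hm : 4 * m + 2 ≤ d) :
    ∑ i ∈ range (d + 1), h i * (d - i).choose m <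
      ∑ i ∈ range (d + 1), h i * (d - i).choose (m + 1) := by
  have double : ∀ n, 2 * ∑ i ∈ range (d + 1), h i * (d - i).choose n =
      ∑ i ∈ range (d + 1), h i * ((d - i).choose n + i.choose n) := by
    intro n
    rw [two_mul]
    nth_rewrite 2 [sum_mul_choose_sub_reflect hsym]
    simp only [mul_add, sum_add_distrib]
  suffices hlt : ∑ i ∈ range (d + 1), h i * ((d - i).choose m + i.choose m) <
      ∑ i ∈ range (d + 1), h i * ((d - i).choose (m + 1) + i.choose (m + 1)) by
    rw [← double, ← double] at hlt
    omega
  apply sum_lt_sum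
  · intro i hi
    have hi : i ≤ d := Nat.lt_succ_iff.mp (mem_range.mp hi)
    exact Nat.mul_le_mul_left _ (Nat.choose_add_choose_le_succ (by omega))
  · exact ⟨0, by simp, Nat.mul_lt_mul_of_pos_left (Nat.choose_add_choose_zero_lt_succ hd hm) h0⟩

theorem stmt6_general (d : ℕ) (hd : 3 ≤ d) (h : ℕ → ℕ) (h0 : h 0 = 1)
    (hsym : ∀ i, i ≤ d → h i = h (d - i))
    (f : ℕ → ℕ)
    (hf : ∀ k, f k = ∑ i ∈ Finset.range (d + 1), h i * Nat.choose (d - i) (d - 1 - k)) :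
    ∀ k, 3 * (d - 1) / 4 ≤ k → k + 1 ≤ d - 1 → f (k + 1) < f k := by
  intro k hk hk1
  rw [hf, hf, show d - 1 - (k + 1) = d - 2 - k by omega, show d - 1 - k = d - 2 - k + 1 by omega]
  exact sum_mul_choose_sub_lt_succ hd (by omega) hsym (by omega)

theorem stmt6 (d : ℕ) (hd : 3 ≤ d) (h : ℕ → ℕ) (h0 : h 0 = 1) (hdd : h d = 1)
    (hsym : ∀ i, i ≤ d → h i = h (d - i))
    (f : ℕ → ℕ)
    (hf : ∀ k, f k = ∑ i ∈ Finset.range (d + 1), h i * Nat.choose (d - i) (d - 1 - k)) :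
    ∀ k, 3 * (d - 1) / 4 ≤ k → k + 1 ≤ d - 1 → f (k + 1) < f k :=
  stmt6_general d hd h h0 hsym f hf
end

section
/- Let d ≥ 3 and let h_0,...,h_d be nonnegative integers with h_0 = 1 and h_i ≥ h_{d-i} for 0 ≤ i ≤ ⌊d/2⌋. Define f_k = Σ_{i=0}^d h_i C(d-i, d-1-k). Then f_0 < f_1 < ... < f_{⌊(d-1)/2⌋}, provided h_1 ≥ 1. -/
/-!
Each summand `h i * C(d - i, d - 1 - k)` of `f k` is nondecreasing in `k` while `2k + 3 ≤ d`,
by unimodality of binomial coefficients, and the summand `i = 1` is strictly increasing there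
because `h 1 ≥ 1`.
-/

namespace Nat

theorem choose_succ_le_of_le_two_mul_add_one {n s : ℕ} (h : n ≤ 2 * s + 1) :
    n.choose (s + 1) ≤ n.choose s := by
  refine Nat.le_of_mul_le_mul_right ?_ s.succ_pos
  rw [choose_succ_right_eq]
  exact Nat.mul_le_mul_left _ (by omega)

theorem choose_lt_succ_of_lt_half_left {n r : ℕ} (h : r < n / 2) :
    n.choose r < n.choose (r + 1) := by
  refine Nat.lt_of_mul_lt_mul_right (a := r + 1) ?_
  rw [choose_succ_right_eq]
  exact Nat.mul_lt_mul_of_pos_left (by omega) (choose_pos (by omega))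

end Nat

theorem choose_sub_le_choose_sub_succ {d k : ℕ} (hk : 2 * k + 3 ≤ d) (i : ℕ) :
    (d - i).choose (d - 1 - k) ≤ (d - i).choose (d - 1 - (k + 1)) := by
  rw [show d - 1 - k = d - 1 - (k + 1) + 1 by omega]
  exact Nat.choose_succ_le_of_le_two_mul_add_one (by omega)

theorem choose_pred_sub_lt_choose_pred_sub_succ {d k : ℕ} (hk : 2 * k + 3 ≤ d) :
    (d - 1).choose (d - 1 - k) < (d - 1).choose (d - 1 - (k + 1)) := by
  rw [Nat.choose_symm (by omega), Nat.choose_symm (by omega)]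
  exact Nat.choose_lt_succ_of_lt_half_left (by omega)

theorem stmt10_general (d : ℕ) (h : ℕ → ℕ) (h1 : 1 ≤ h 1)
    (f : ℕ → ℕ)
    (hf : ∀ k, f k = ∑ i ∈ Finset.range (d + 1), h i * Nat.choose (d - i) (d - 1 - k)) :
    ∀ k, k + 1 ≤ (d - 1) / 2 → f k < f (k + 1) := by
  intro k hk
  have hdk : 2 * k + 3 ≤ d := by omega
  rw [hf k, hf (k + 1)]
  refine Finset.sum_lt_sum
    (fun i _ => Nat.mul_le_mul_left _ (choose_sub_le_choose_sub_succ hdk i))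
    ⟨1, Finset.mem_range.mpr (by omega), ?_⟩
  exact Nat.mul_lt_mul_of_pos_left (choose_pred_sub_lt_choose_pred_sub_succ hdk) h1

theorem stmt10 (d : ℕ) (hd : 3 ≤ d) (h : ℕ → ℕ) (h0 : h 0 = 1) (h1 : 1 ≤ h 1)
    (hsym : ∀ i, i ≤ d / 2 → h (d - i) ≤ h i)
    (f : ℕ → ℕ)
    (hf : ∀ k, f k = ∑ i ∈ Finset.range (d + 1), h i * Nat.choose (d - i) (d - 1 - k)) :
    ∀ k, k + 1 ≤ (d - 1) / 2 → f k < f (k + 1) :=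
  stmt10_general d h h1 f hf
end
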